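/- Every smooth 2-dimensional combinatorial cube in ℝ^2 (i.e., every smooth lattice quadrilateral) has two distinct parallel edges. -/

import Mathlib

open Pointwise

noncomputable section

/-- A point of `ℝ^d` is a *lattice point* if all its coordinates are integers. -/
def IsLatticePoint {d : ℕ} (x : Fin d → ℝ) : Prop :=
  ∀ i, ∃ n : ℤ, x i = (n : ℝ)

/-- A *polytope* is the convex hull of finitely many points. -/
def IsPolytope {E : Type*} [AddCommGroup E] [Module ℝ E] (P : Set E) : Prop :=
  ∃ V : Finset E, P = convexHull ℝ (V : Set E)

/-- A *lattice polytope* in `ℝ^d` is the convex hull of finitely many lattice points. -/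
def IsLatticePolytope {d : ℕ} (P : Set (Fin d → ℝ)) : Prop :=
  ∃ V : Finset (Fin d → ℝ), (∀ v ∈ V, IsLatticePoint v) ∧
    P = convexHull ℝ (V : Set (Fin d → ℝ))

/-- The subset of `P` on which the linear functional `u` is maximized. -/
def maxFace {E : Type*} [AddCommGroup E] [Module ℝ E] (P : Set E) (u : E →ₗ[ℝ] ℝ) : Set E :=
  {x ∈ P | ∀ y ∈ P, u y ≤ u x}

/-- `F` is a face of `P` if it is the maximizing set of some linear functional on `P`. -/
def IsFaceOf {E : Type*} [AddCommGroup E] [Module ℝ E] (P F : Set E) : Prop :=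
  ∃ u : E →ₗ[ℝ] ℝ, F = maxFace P u

/-- The dimension of a subset: the rank of the direction of its affine span. -/
def dimSet {E : Type*} [AddCommGroup E] [Module ℝ E] (F : Set E) : ℕ :=
  Module.finrank ℝ (affineSpan ℝ F).direction

/-- Two sets are parallel if the directions (linear parts) of their affine spans coincide. -/
def AreParallel {E : Type*} [AddCommGroup E] [Module ℝ E] (F G : Set E) : Prop :=
  (affineSpan ℝ F).direction = (affineSpan ℝ G).direction

/-- A facet is a face of codimension one. -/
def IsFacetOf {E : Type*} [AddCommGroup E] [Module ℝ E] (P F : Set E) : Prop :=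
  IsFaceOf P F ∧ dimSet F + 1 = dimSet P

/-- A vertex of `P` is a point whose singleton is a face of `P`. -/
def IsVertexOf {E : Type*} [AddCommGroup E] [Module ℝ E] (P : Set E) (v : E) : Prop :=
  IsFaceOf P {v}

/-- An edge of `P` is a one-dimensional face of `P`. -/
def IsEdgeOf {E : Type*} [AddCommGroup E] [Module ℝ E] (P F : Set E) : Prop :=
  IsFaceOf P F ∧ dimSet F = 1

/-- A polytope in `ℝ^d` is simple if every vertex is contained in exactly `d` edges. -/
def IsSimplePolytope {d : ℕ} (P : Set (Fin d → ℝ)) : Prop :=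
  ∀ v : Fin d → ℝ, IsVertexOf P v →
    {F : Set (Fin d → ℝ) | IsEdgeOf P F ∧ v ∈ F}.ncard = d

/-- An integer vector is primitive if it is not a nontrivial integer multiple of
another integer vector (in particular it is nonzero). -/
def IsPrimitiveVector {d : ℕ} (u : Fin d → ℤ) : Prop :=
  ∀ (k : ℤ) (w : Fin d → ℤ), u = k • w → IsUnit k

/-- `u` is a primitive edge direction of `P` at the vertex `v`: a primitive lattice vector
pointing from `v` along an edge of `P` incident to `v`. -/
def IsPrimitiveEdgeDirectionAt {d : ℕ} (P : Set (Fin d → ℝ)) (v : Fin d → ℝ)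
    (u : Fin d → ℤ) : Prop :=
  IsPrimitiveVector u ∧
    ∃ F : Set (Fin d → ℝ), IsEdgeOf P F ∧ v ∈ F ∧
      ∃ ε : ℝ, 0 < ε ∧ (v + ε • fun i => (u i : ℝ)) ∈ F

/-- A lattice polytope is smooth if it is simple and, at each vertex, the primitive
edge directions form a `ℤ`-basis of `ℤ^d`. -/
def IsSmoothPolytope {d : ℕ} (P : Set (Fin d → ℝ)) : Prop :=
  IsLatticePolytope P ∧ IsSimplePolytope P ∧
    ∀ v : Fin d → ℝ, IsVertexOf P v →
      ∃ b : Module.Basis (Fin d) ℤ (Fin d → ℤ), ∀ i, IsPrimitiveEdgeDirectionAt P v (b i)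

/-- The unit cube `[0,1]^d`. -/
def unitCube (d : ℕ) : Set (Fin d → ℝ) := {x | ∀ i, x i ∈ Set.Icc (0 : ℝ) 1}

/-- A `d`-dimensional combinatorial cube: a `d`-dimensional lattice polytope whose face
poset is order-isomorphic to the face poset of the unit cube `[0,1]^d`. -/
def IsCombinatorialCube (d : ℕ) (C : Set (Fin d → ℝ)) : Prop :=
  IsLatticePolytope C ∧ dimSet C = d ∧
    Nonempty ({F : Set (Fin d → ℝ) // IsFaceOf (unitCube d) F} ≃o
              {F : Set (Fin d → ℝ) // IsFaceOf C F})

/-- The pair `(P, Q)` has the Integer Decomposition Property: every lattice point of the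
Minkowski sum `P + Q` is a sum of a lattice point of `P` and a lattice point of `Q`. -/
def IsIDPPair {d : ℕ} (P Q : Set (Fin d → ℝ)) : Prop :=
  ∀ x : Fin d → ℝ, IsLatticePoint x → x ∈ P + Q →
    ∃ p ∈ P, ∃ q ∈ Q, IsLatticePoint p ∧ IsLatticePoint q ∧ x = p + q

/-- `P` and `Q` are Minkowski equivalent (have the same normal fan): two linear functionals
are maximized on the same face of `P` if and only if they are maximized on the same face
of `Q`. -/
def MinkowskiEquivalent {E : Type*} [AddCommGroup E] [Module ℝ E] (P Q : Set E) : Prop :=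
  ∀ u v : E →ₗ[ℝ] ℝ, maxFace P u = maxFace P v ↔ maxFace Q u = maxFace Q v

/-- `P` is a `d`-dimensional prismatoid with top facet `T` and bottom facet `B`: a
`d`-dimensional lattice polytope whose face poset is order-isomorphic to the face poset of
a prism `Q × [0,1]` over a `(d-1)`-dimensional polytope `Q`, where `T` and `B` are the
faces corresponding to `Q × {1}` and `Q × {0}` respectively, and `T` and `B` are parallel. -/
def IsPrismatoid (d : ℕ) (P T B : Set (Fin d → ℝ)) : Prop :=
  IsLatticePolytope P ∧ dimSet P = d ∧
    ∃ Q : Set (Fin (d - 1) → ℝ), IsPolytope Q ∧ dimSet Q = d - 1 ∧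
      ∃ φ : {F : Set ((Fin (d - 1) → ℝ) × ℝ) // IsFaceOf (Q ×ˢ Set.Icc (0 : ℝ) 1) F} ≃o
            {F : Set (Fin d → ℝ) // IsFaceOf P F},
        (∃ hT : IsFaceOf (Q ×ˢ Set.Icc (0 : ℝ) 1) (Q ×ˢ ({1} : Set ℝ)),
            (φ ⟨Q ×ˢ ({1} : Set ℝ), hT⟩).1 = T) ∧
        (∃ hB : IsFaceOf (Q ×ˢ Set.Icc (0 : ℝ) 1) (Q ×ˢ ({0} : Set ℝ)),
            (φ ⟨Q ×ˢ ({0} : Set ℝ), hB⟩).1 = B) ∧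
        AreParallel T B

/-- The face `F_I^J` of the unit cube given by disjoint index sets `I` (coordinates pinned
to `0`) and `J` (coordinates pinned to `1`). -/
def cubeFace (d : ℕ) (I J : Set (Fin d)) : Set (Fin d → ℝ) :=
  {x ∈ unitCube d | (∀ k ∈ I, x k = 0) ∧ (∀ k ∈ J, x k = 1)}

/-- Under a fixed order isomorphism `φ` from the face poset of the unit cube to the face
poset of `C`, the set `F` is the face of `C` corresponding to the face `F_I^J` of the
unit cube. -/
def IsCubeFaceImage {d : ℕ} {C : Set (Fin d → ℝ)}
    (φ : {F : Set (Fin d → ℝ) // IsFaceOf (unitCube d) F} ≃o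
         {F : Set (Fin d → ℝ) // IsFaceOf C F})
    (I J : Set (Fin d)) (F : Set (Fin d → ℝ)) : Prop :=
  ∃ h : IsFaceOf (unitCube d) (cubeFace d I J), (φ ⟨cubeFace d I J, h⟩).1 = F

/-- The last coordinate index of `Fin d` (for `0 < d`). -/
def lastIdx (d : ℕ) (hd : 0 < d) : Fin d := ⟨d - 1, Nat.sub_lt hd Nat.one_pos⟩

/-- The linear functional `x ↦ ⟨y, x⟩ = ∑ i, y i * x i` on `ℝ^d`. -/
def dotL {d : ℕ} (y : Fin d → ℝ) : (Fin d → ℝ) →ₗ[ℝ] ℝ :=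
  ∑ i, y i • LinearMap.proj (R := ℝ) (φ := fun _ : Fin d => ℝ) i


/-!
The order isomorphism with the face poset of the square matches minimal faces, so `C` has four
vertices, and simplicity makes them a cycle `v₀ v₁ v₂ v₃` of edges. Let `Pᵢ` be the primitive
direction of the edge from `vᵢ` to `vᵢ₊₁`. Smoothness at `vᵢ₊₁` gives `det (Pᵢ, Pᵢ₊₁) = ±1`,
and convexity makes all four of these determinants have the same sign, so they are all equal
to some `ε`. The Plücker relation then gives
`det (P₀, P₂) * det (P₁, P₃) = det (P₀, P₁) * det (P₂, P₃) + det (P₀, P₃) * det (P₁, P₂)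
= ε² - ε² = 0`, so one pair of opposite edges is parallel.
-/

open Filter Topology

section Faces

variable {E : Type*} [AddCommGroup E] [Module ℝ E]

lemma maxFace_subset (P : Set E) (u : E →ₗ[ℝ] ℝ) : maxFace P u ⊆ P := fun _ hx => hx.1

lemma maxFace_nonempty {V : Set E} (hV : V.Finite) (hne : V.Nonempty) (u : E →ₗ[ℝ] ℝ) :
    (maxFace V u).Nonempty :=
  Set.exists_max_image V u hV hne

lemma lt_of_mem_maxFace_of_notMem {P : Set E} {u : E →ₗ[ℝ] ℝ} {a z : E}
    (ha : a ∈ maxFace P u) (hz : z ∈ P) (hzF : z ∉ maxFace P u) : u z < u a :=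
  (ha.2 z hz).lt_of_ne fun h => hzF ⟨hz, fun y hy => h ▸ ha.2 y hy⟩

lemma maxFace_convexHull {V : Set E} (hV : V.Finite) (u : E →ₗ[ℝ] ℝ) :
    maxFace (convexHull ℝ V) u = convexHull ℝ (maxFace V u) := by
  rcases V.eq_empty_or_nonempty with rfl | hne
  · simp [maxFace]
  obtain ⟨x₀, hx₀V, hx₀⟩ := Set.exists_max_image V u hV hne
  have hle : convexHull ℝ V ⊆ {y | u y ≤ u x₀} :=
    convexHull_min hx₀ (convex_halfSpace_le u.isLinear _)
  have heq : convexHull ℝ (maxFace V u) ⊆ {y | u y = u x₀} :=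
    convexHull_min (fun y hy => le_antisymm (hx₀ y hy.1) (hy.2 x₀ hx₀V))
      (convex_hyperplane u.isLinear _)
  refine Set.Subset.antisymm (fun x ⟨hxV, hxmax⟩ => ?_) fun x hx =>
    ⟨convexHull_mono (maxFace_subset _ _) hx, fun y hy => (hle hy).trans (heq hx).ge⟩
  have hux : u x₀ ≤ u x := hxmax x₀ (subset_convexHull ℝ V hx₀V)
  rcases (V \ maxFace V u).eq_empty_or_nonempty with hN | hN
  · rwa [Set.Subset.antisymm (maxFace_subset V u) (Set.sdiff_eq_empty.1 hN)]
  -- Split `V` into the maximizers and the rest: a point of the hull with maximal value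
  -- cannot use the rest with positive weight.
  obtain ⟨n₀, ⟨hn₀V, hn₀M⟩, hn₀⟩ := Set.exists_max_image _ u hV.sdiff hN
  have hn₀lt : u n₀ < u x₀ := by
    by_contra! h
    exact hn₀M ⟨hn₀V, fun y hy => (hx₀ y hy).trans h⟩
  have hNle : convexHull ℝ (V \ maxFace V u) ⊆ {y | u y ≤ u n₀} :=
    convexHull_min hn₀ (convex_halfSpace_le u.isLinear _)
  have hjoin : convexHull ℝ V =
      convexJoin ℝ (convexHull ℝ (maxFace V u)) (convexHull ℝ (V \ maxFace V u)) := by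
    rw [← convexHull_union (maxFace_nonempty hV hne u) hN,
      Set.union_sdiff_cancel (maxFace_subset V u)]
  rw [hjoin] at hxV
  obtain ⟨a, ha, b, hb, α, β, hα, hβ, hαβ, rfl⟩ := mem_convexJoin.1 hxV
  have hua : u a = u x₀ := heq ha
  have hub : u b ≤ u n₀ := hNle hb
  have hβ0 : β = 0 := by
    simp only [map_add, map_smul, smul_eq_mul, hua] at hux
    obtain rfl : α = 1 - β := by linarith
    by_contra hβ0
    have := mul_pos (hβ.lt_of_ne' hβ0) (by linarith : 0 < u x₀ - u b)
    linarith
  simpa [hβ0, show α = 1 by linarith] using ha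

lemma eventually_add_smul_le_iff (u w : E →ₗ[ℝ] ℝ) (x y : E) :
    ∀ᶠ t in 𝓝[>] (0 : ℝ),
      ((u + t • w) x ≤ (u + t • w) y ↔ u x < u y ∨ u x = u y ∧ w x ≤ w y) := by
  have hlim : ∀ z : E, Tendsto (fun t : ℝ => u z + t * w z) (𝓝[>] 0) (𝓝 (u z)) := fun z =>
    tendsto_nhdsWithin_of_tendsto_nhds
      ((continuous_const.add (continuous_id.mul continuous_const)).tendsto' 0 _ (by simp))
  simp only [LinearMap.add_apply, LinearMap.smul_apply, smul_eq_mul]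
  rcases lt_trichotomy (u x) (u y) with h | h | h
  · filter_upwards [(hlim x).eventually_lt (hlim y) h] with t ht
    simp [ht.le, h]
  · filter_upwards [self_mem_nhdsWithin] with t (ht : 0 < t)
    simp [h, mul_le_mul_iff_right₀ ht]
  · filter_upwards [(hlim y).eventually_lt (hlim x) h] with t ht
    simp [ht, h.not_gt, h.ne']

lemma exists_maxFace_add_smul {V : Set E} (hV : V.Finite) (u w : E →ₗ[ℝ] ℝ) :
    ∃ t : ℝ, 0 < t ∧ maxFace V (u + t • w) = maxFace (maxFace V u) w := by
  have h := (eventually_all_finite (hV.prod hV)).2 fun p _ =>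
    eventually_add_smul_le_iff u w p.1 p.2
  obtain ⟨t, ht, ht0⟩ := (h.and self_mem_nhdsWithin).exists
  have hcmp : ∀ x ∈ V, ∀ y ∈ V, ((u + t • w) y ≤ (u + t • w) x ↔
      u y < u x ∨ u y = u x ∧ w y ≤ w x) := fun x hx y hy => ht (y, x) ⟨hy, hx⟩
  refine ⟨t, ht0, Set.ext fun x => ⟨?_, ?_⟩⟩
  · rintro ⟨hxV, hx⟩
    have hxu : ∀ y ∈ V, u y ≤ u x := fun y hy =>
      ((hcmp x hxV y hy).1 (hx y hy)).elim le_of_lt (fun h => h.1.le)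
    refine ⟨⟨hxV, hxu⟩, fun y ⟨hyV, hyu⟩ => ?_⟩
    rcases (hcmp x hxV y hyV).1 (hx y hyV) with h | h
    · exact absurd (hyu x hxV) h.not_ge
    · exact h.2
  · rintro ⟨⟨hxV, hxu⟩, hxw⟩
    refine ⟨hxV, fun y hy => (hcmp x hxV y hy).2 ?_⟩
    rcases (hxu y hy).lt_or_eq with h | h
    · exact Or.inl h
    · exact Or.inr ⟨h, hxw y ⟨hy, fun z hz => h ▸ hxu z hz⟩⟩

end Faces

section Polytopes

variable {E : Type*} [AddCommGroup E] [Module ℝ E] {P F G : Set E}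

lemma IsFaceOf.isPolytope (hP : IsPolytope P) (hF : IsFaceOf P F) : IsPolytope F := by
  obtain ⟨V, rfl⟩ := hP
  obtain ⟨u, rfl⟩ := hF
  have hfin := V.finite_toSet.subset (maxFace_subset _ u)
  exact ⟨hfin.toFinset, by rw [maxFace_convexHull V.finite_toSet, hfin.coe_toFinset]⟩

lemma IsFaceOf.trans (hP : IsPolytope P) (hF : IsFaceOf P F) (hG : IsFaceOf F G) :
    IsFaceOf P G := by
  obtain ⟨V, rfl⟩ := hP
  obtain ⟨u, rfl⟩ := hF
  obtain ⟨w, rfl⟩ := hG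
  have hfin := V.finite_toSet.subset (maxFace_subset _ u)
  obtain ⟨t, -, ht⟩ := exists_maxFace_add_smul V.finite_toSet u w
  exact ⟨u + t • w, by
    rw [maxFace_convexHull V.finite_toSet, maxFace_convexHull V.finite_toSet,
      maxFace_convexHull hfin, ht]⟩

lemma IsFaceOf.nonempty (hP : IsPolytope P) (hne : P.Nonempty) (hF : IsFaceOf P F) :
    F.Nonempty := by
  obtain ⟨V, rfl⟩ := hP
  obtain ⟨u, rfl⟩ := hF
  rw [maxFace_convexHull V.finite_toSet]
  exact (maxFace_nonempty V.finite_toSet (convexHull_nonempty_iff.1 hne) u).mono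
    (subset_convexHull ℝ _)

lemma IsVertexOf.mem {v : E} (hv : IsVertexOf P v) : v ∈ P := by
  obtain ⟨u, hu⟩ := hv
  exact maxFace_subset P u (hu ▸ rfl)

lemma IsPolytope.exists_isVertexOf (hP : IsPolytope P) (hne : P.Nonempty) :
    ∃ v, IsVertexOf P v := by
  obtain ⟨V, rfl⟩ := hP
  induction V using Finset.strongInduction with
  | H V ih =>
  rcases (V : Set E).subsingleton_or_nontrivial with hV | ⟨p, hp, q, hq, hpq⟩
  · obtain ⟨v, hv⟩ := convexHull_nonempty_iff.1 hne
    refine ⟨v, 0, ?_⟩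
    rw [hV.eq_singleton_of_mem hv, convexHull_singleton]
    simp [maxFace]
  -- Maximizing a functional separating `p` from `q` gives a face with fewer vertices.
  obtain ⟨w, hw⟩ := Module.Projective.exists_dual_eq_one ℝ (sub_ne_zero.2 hpq)
  have hfin := V.finite_toSet.subset (maxFace_subset _ w)
  have hface : IsFaceOf (convexHull ℝ ↑V) (convexHull ℝ ↑hfin.toFinset) :=
    ⟨w, by rw [maxFace_convexHull V.finite_toSet, hfin.coe_toFinset]⟩
  have hsub : hfin.toFinset ⊂ V := by
    refine Finset.ssubset_iff_subset_ne.2 ⟨fun x hx => ?_, fun h => ?_⟩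
    · exact (hfin.mem_toFinset.1 hx).1
    · have hq' : q ∈ maxFace (V : Set E) w := hfin.mem_toFinset.1 (h.symm ▸ hq)
      have := hq'.2 p hp
      rw [map_sub, sub_eq_iff_eq_add] at hw
      linarith
  obtain ⟨v, hv⟩ := ih _ hsub (hface.nonempty ⟨V, rfl⟩ hne)
  exact ⟨v, hface.trans ⟨V, rfl⟩ hv⟩

lemma IsFaceOf.exists_isVertexOf_mem (hP : IsPolytope P) (hne : P.Nonempty)
    (hF : IsFaceOf P F) : ∃ v ∈ F, IsVertexOf P v := by
  obtain ⟨v, hv⟩ := (hF.isPolytope hP).exists_isVertexOf (hF.nonempty hP hne)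
  exact ⟨v, hv.mem, hF.trans hP hv⟩

lemma IsVertexOf.mem_extremePoints {v : E} (hv : IsVertexOf P v) : v ∈ P.extremePoints ℝ := by
  obtain ⟨u, hu⟩ := hv
  have hvF : v ∈ maxFace P u := hu ▸ rfl
  have heq : ∀ x ∈ P, u v ≤ u x → x = v := fun x hx hxv => by
    have : x ∈ maxFace P u := ⟨hx, fun y hy => (hvF.2 y hy).trans hxv⟩
    rwa [← hu] at this
  refine _root_.mem_extremePoints.2 ⟨hvF.1, fun x₁ hx₁ x₂ hx₂ ⟨a, b, ha, hb, hab, hx⟩ => ?_⟩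
  have h₁ := hvF.2 x₁ hx₁
  have h₂ := hvF.2 x₂ hx₂
  have hval : a * (u v - u x₁) + b * (u v - u x₂) = 0 := by
    rw [← hx]
    simp only [map_add, map_smul, smul_eq_mul]
    linear_combination (a * u x₁ + b * u x₂) * hab
  exact ⟨heq x₁ hx₁ (by nlinarith [mul_nonneg hb.le (sub_nonneg.2 h₂)]),
    heq x₂ hx₂ (by nlinarith [mul_nonneg ha.le (sub_nonneg.2 h₁)])⟩

lemma IsVertexOf.eq_of_mem_segment {v p q : E} (hv : IsVertexOf P v) (hp : p ∈ P) (hq : q ∈ P)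
    (hvp : v ≠ p) (h : v ∈ segment ℝ p q) : v = q :=
  ((mem_extremePoints_iff_forall_segment.1 hv.mem_extremePoints).2 p hp q hq h).resolve_left
    (Ne.symm hvp) |>.symm

lemma isVertexOf_segment_right {p q : E} (hpq : p ≠ q) : IsVertexOf (segment ℝ p q) q := by
  obtain ⟨w, hw⟩ := Module.Projective.exists_dual_eq_one ℝ (sub_ne_zero.2 hpq.symm)
  have hval : ∀ θ : ℝ, w (p + θ • (q - p)) = w p + θ := fun θ => by simp [hw]
  refine ⟨w, Set.Subset.antisymm ?_ ?_⟩
  · refine Set.singleton_subset_iff.2 ⟨right_mem_segment ℝ p q, ?_⟩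
    rw [segment_eq_image']
    rintro _ ⟨θ, hθ, rfl⟩
    have := hval 1
    rw [one_smul, add_sub_cancel] at this
    rw [hval, this]
    linarith [hθ.2]
  · rintro x ⟨hx, hmax⟩
    rw [segment_eq_image'] at hx
    obtain ⟨θ, hθ, rfl⟩ := hx
    have h1 := hmax q (right_mem_segment ℝ p q)
    have := hval 1
    rw [one_smul, add_sub_cancel] at this
    rw [hval, this] at h1
    obtain rfl : θ = 1 := le_antisymm hθ.2 (by linarith)
    simp

lemma direction_affineSpan_segment (p q : E) :
    (affineSpan ℝ (segment ℝ p q)).direction = ℝ ∙ (q - p) := by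
  rw [← convexHull_pair, affineSpan_convexHull, direction_affineSpan, vectorSpan_pair_rev,
    vsub_eq_sub]

lemma Set.Nonempty.of_dimSet_ne_zero {F : Set E}
    (h : dimSet F ≠ 0) : F.Nonempty := by
  rw [Set.nonempty_iff_ne_empty]
  rintro rfl
  rw [dimSet, direction_affineSpan, vectorSpan_empty, finrank_bot] at h
  exact h rfl

lemma sameRay_of_add_smul_mem_segment {a b z : E}
    {ε : ℝ} (hε : 0 < ε) (h : a + ε • z ∈ segment ℝ a b) : SameRay ℝ (b - a) z := by
  rw [mem_segment_iff_sameRay, add_sub_cancel_left] at h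
  have h' := h.add_right SameRay.rfl
  rw [show b - (a + ε • z) + ε • z = b - a by abel] at h'
  simpa [smul_smul, hε.ne'] using h'.symm.pos_smul_right (inv_pos.2 hε)

lemma exists_convexHull_eq_segment_of_finite {T : Set ℝ} (hT : T.Finite) (hne : T.Nonempty) :
    ∃ a b : ℝ, convexHull ℝ T = segment ℝ a b := by
  obtain ⟨a, ha, hamin⟩ := Set.exists_min_image T id hT hne
  obtain ⟨b, hb, hbmax⟩ := Set.exists_max_image T id hT hne
  refine ⟨a, b, Set.Subset.antisymm ?_ (segment_subset_convexHull ha hb)⟩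
  have hab : a ≤ b := hamin b hb
  rw [segment_eq_Icc hab]
  exact convexHull_min (fun c hc => ⟨hamin c hc, hbmax c hc⟩) (convex_Icc a b)

lemma IsPolytope.exists_eq_segment_of_dimSet_eq_one (hF : IsPolytope F) (hdim : dimSet F = 1) :
    ∃ p q : E, p ≠ q ∧ F = segment ℝ p q := by
  obtain ⟨S, rfl⟩ := hF
  obtain ⟨s₀, hs₀⟩ :=
    convexHull_nonempty_iff.1 (Set.Nonempty.of_dimSet_ne_zero (by rw [hdim]; simp))
  have hdimS : Module.finrank ℝ (vectorSpan ℝ (S : Set E)) = 1 := by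
    rwa [dimSet, affineSpan_convexHull, direction_affineSpan] at hdim
  obtain ⟨⟨e, he⟩, he0, hspan⟩ := finrank_eq_one_iff'.1 hdimS
  have he0 : e ≠ 0 := fun h => he0 (Subtype.ext h)
  -- `S` lies on the line `c ↦ s₀ + c • e`; pull it back to a finite subset of `ℝ`.
  set f : ℝ →ᵃ[ℝ] E := AffineMap.lineMap s₀ (s₀ + e)
  have hf : ∀ c, f c = s₀ + c • e := fun c => by
    simp [f, AffineMap.lineMap_apply, add_comm]
  have hf_inj : Function.Injective f :=
    AffineMap.lineMap_injective ℝ fun h => he0 (by simpa using h.symm)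
  have hS : (S : Set E) ⊆ Set.range f := fun s hs => by
    obtain ⟨c, hc⟩ := hspan ⟨s -ᵥ s₀, vsub_mem_vectorSpan ℝ hs hs₀⟩
    exact ⟨c, by rw [hf, show c • e = s - s₀ from congrArg Subtype.val hc]; abel⟩
  have hTne : (f ⁻¹' S).Nonempty := by
    obtain ⟨c, hc⟩ := hS hs₀
    exact ⟨c, show f c ∈ (S : Set E) from hc ▸ hs₀⟩
  obtain ⟨a, b, hT⟩ :=
    exists_convexHull_eq_segment_of_finite (S.finite_toSet.preimage hf_inj.injOn) hTne
  have hconvS : convexHull ℝ (S : Set E) = segment ℝ (f a) (f b) := by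
    rw [← Set.image_preimage_eq_of_subset hS, ← AffineMap.image_convexHull, hT, image_segment]
  refine ⟨f a, f b, fun hab => ?_, hconvS⟩
  rw [hconvS, ← hab, segment_same, dimSet, direction_affineSpan, vectorSpan_singleton,
    finrank_bot] at hdim
  exact zero_ne_one hdim

lemma IsEdgeOf.exists_eq_segment (hP : IsPolytope P) (hF : IsEdgeOf P F) :
    ∃ p q : E, p ≠ q ∧ IsVertexOf P p ∧ IsVertexOf P q ∧ F = segment ℝ p q := by
  obtain ⟨p, q, hpq, rfl⟩ := (hF.1.isPolytope hP).exists_eq_segment_of_dimSet_eq_one hF.2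
  refine ⟨p, q, hpq, hF.1.trans hP ?_, hF.1.trans hP (isVertexOf_segment_right hpq), rfl⟩
  rw [segment_symm]
  exact isVertexOf_segment_right hpq.symm

lemma IsEdgeOf.exists_eq_segment_of_mem (hP : IsPolytope P) (hF : IsEdgeOf P F) {v : E}
    (hv : IsVertexOf P v) (hvF : v ∈ F) :
    ∃ w, v ≠ w ∧ IsVertexOf P w ∧ F = segment ℝ v w := by
  obtain ⟨p, q, hpq, hp, hq, rfl⟩ := hF.exists_eq_segment hP
  by_cases hvp : v = p
  · exact ⟨q, hvp ▸ hpq, hq, hvp ▸ rfl⟩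
  · obtain rfl := hv.eq_of_mem_segment hp.mem hq.mem hvp hvF
    exact ⟨p, hvp, hp, segment_symm ℝ p v⟩

end Polytopes

section FacePoset

variable {E E' : Type*} [AddCommGroup E] [Module ℝ E] [AddCommGroup E'] [Module ℝ E']

lemma isMin_iff_exists_eq_singleton {P : Set E}
    (hP : ∀ F, IsFaceOf P F → ∃ v ∈ F, IsVertexOf P v) (F : {F // IsFaceOf P F}) :
    IsMin F ↔ ∃ v, IsVertexOf P v ∧ F.1 = {v} := by
  refine ⟨fun hF => ?_, fun ⟨v, _, hFv⟩ G hGF => ?_⟩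
  · obtain ⟨v, hvF, hv⟩ := hP F.1 F.2
    have hle : (⟨{v}, hv⟩ : {F // IsFaceOf P F}) ≤ F := Set.singleton_subset_iff.2 hvF
    exact ⟨v, hv, Set.Subset.antisymm (hF hle) (Set.singleton_subset_iff.2 hvF)⟩
  · obtain ⟨w, hwG, -⟩ := hP G.1 G.2
    have hGv : G.1 = {v} := (Set.nonempty_of_mem hwG).subset_singleton_iff.1 (hFv ▸ hGF)
    exact (show F.1 ⊆ G.1 by rw [hFv, hGv])

lemma natCard_vertices_eq_natCard_isMin {P : Set E}
    (hP : ∀ F, IsFaceOf P F → ∃ v ∈ F, IsVertexOf P v) :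
    Nat.card {v // IsVertexOf P v} = Nat.card {F : {F // IsFaceOf P F} // IsMin F} := by
  refine Nat.card_congr (Equiv.ofBijective
    (fun v => ⟨⟨{v.1}, v.2⟩, (isMin_iff_exists_eq_singleton hP _).2 ⟨v.1, v.2, rfl⟩⟩)
    ⟨fun v w h => Subtype.ext (Set.singleton_injective (congrArg (·.1.1) h)), fun F => ?_⟩)
  obtain ⟨v, hv, hF⟩ := (isMin_iff_exists_eq_singleton hP F.1).1 F.2
  exact ⟨⟨v, hv⟩, Subtype.ext (Subtype.ext hF.symm)⟩

lemma natCard_vertices_eq_of_orderIso {P : Set E} {Q : Set E'}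
    (hP : ∀ F, IsFaceOf P F → ∃ v ∈ F, IsVertexOf P v)
    (hQ : ∀ F, IsFaceOf Q F → ∃ v ∈ F, IsVertexOf Q v)
    (φ : {F // IsFaceOf P F} ≃o {F // IsFaceOf Q F}) :
    Nat.card {v // IsVertexOf P v} = Nat.card {v // IsVertexOf Q v} := by
  rw [natCard_vertices_eq_natCard_isMin hP, natCard_vertices_eq_natCard_isMin hQ]
  exact Nat.card_congr (φ.toEquiv.subtypeEquiv fun F => φ.isMin_apply.symm)

end FacePoset

section UnitCube

variable {d : ℕ}

lemma dotL_apply (y x : Fin d → ℝ) : dotL y x = ∑ i, y i * x i := by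
  simp [dotL]

lemma exists_corner_mem_maxFace_unitCube (u : (Fin d → ℝ) →ₗ[ℝ] ℝ) :
    ∃ c ∈ maxFace (unitCube d) u, ∀ i, c i = 0 ∨ c i = 1 := by
  set a : Fin d → ℝ := fun i => u fun j => if i = j then 1 else 0
  have hu : ∀ x, u x = ∑ i, x i * a i := fun x => by
    rw [LinearMap.pi_apply_eq_sum_univ u x]
    rfl
  refine ⟨fun i => if 0 ≤ a i then 1 else 0, ⟨fun i => ?_, fun y hy => ?_⟩, fun i => ?_⟩
  · dsimp only
    split_ifs <;> simp
  · rw [hu, hu]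
    refine Finset.sum_le_sum fun i _ => ?_
    have := hy i
    split_ifs with h
    · nlinarith [this.2]
    · nlinarith [this.1]
  · dsimp only
    split_ifs <;> simp

lemma isVertexOf_unitCube_of_forall {c : Fin d → ℝ} (hc : ∀ i, c i = 0 ∨ c i = 1) :
    IsVertexOf (unitCube d) c := by
  set σ : Fin d → ℝ := fun i => 2 * c i - 1
  have hle : ∀ y ∈ unitCube d, ∀ i, σ i * y i ≤ σ i * c i := fun y hy i => by
    rcases hc i with h | h <;> simp only [σ, h] <;> linarith [(hy i).1, (hy i).2]
  have hc_mem : c ∈ unitCube d := fun i => by rcases hc i with h | h <;> simp [h]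
  refine ⟨dotL σ, Set.Subset.antisymm (Set.singleton_subset_iff.2 ⟨hc_mem, fun y hy => ?_⟩) ?_⟩
  · simp only [dotL_apply]
    exact Finset.sum_le_sum fun i _ => hle y hy i
  · rintro y ⟨hy, hmax⟩
    have hsum : ∑ i, σ i * y i = ∑ i, σ i * c i :=
      le_antisymm (Finset.sum_le_sum fun i _ => hle y hy i)
        (by simpa [dotL_apply] using hmax c hc_mem)
    rw [Finset.sum_eq_sum_iff_of_le fun i _ => hle y hy i] at hsum
    funext i
    have := hsum i (Finset.mem_univ _)
    rcases hc i with h | h <;> simp only [σ, h] at this ⊢ <;> linarith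

lemma isVertexOf_unitCube_iff {c : Fin d → ℝ} :
    IsVertexOf (unitCube d) c ↔ ∀ i, c i = 0 ∨ c i = 1 := by
  refine ⟨fun ⟨u, hu⟩ => ?_, isVertexOf_unitCube_of_forall⟩
  obtain ⟨c', hc'F, hc'⟩ := exists_corner_mem_maxFace_unitCube u
  rw [← hu, Set.mem_singleton_iff] at hc'F
  rwa [← hc'F]

lemma IsFaceOf.exists_isVertexOf_mem_unitCube {F : Set (Fin d → ℝ)}
    (hF : IsFaceOf (unitCube d) F) : ∃ v ∈ F, IsVertexOf (unitCube d) v := by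
  obtain ⟨u, rfl⟩ := hF
  obtain ⟨c, hcF, hc⟩ := exists_corner_mem_maxFace_unitCube u
  exact ⟨c, hcF, isVertexOf_unitCube_of_forall hc⟩

lemma natCard_vertices_unitCube : Nat.card {c // IsVertexOf (unitCube d) c} = 2 ^ d := by
  have e : {c // IsVertexOf (unitCube d) c} ≃ (Fin d → Bool) :=
    { toFun := fun c i => decide (c.1 i = 1)
      invFun := fun b => ⟨fun i => if b i then 1 else 0,
        isVertexOf_unitCube_of_forall fun i => by cases b i <;> simp⟩
      left_inv := fun c => Subtype.ext <| funext fun i => by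
        rcases isVertexOf_unitCube_iff.1 c.2 i with h | h <;> simp [h]
      right_inv := fun b => funext fun i => by cases h : b i <;> simp [h] }
  simp [Nat.card_congr e]

lemma IsLatticePolytope.isPolytope {P : Set (Fin d → ℝ)} (hP : IsLatticePolytope P) :
    IsPolytope P :=
  let ⟨V, _, hV⟩ := hP
  ⟨V, hV⟩

lemma IsCombinatorialCube.natCard_vertices {C : Set (Fin d → ℝ)} (hC : IsCombinatorialCube d C)
    (hne : C.Nonempty) : Nat.card {v // IsVertexOf C v} = 2 ^ d := by
  obtain ⟨hP, -, ⟨φ⟩⟩ := hC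
  rw [← natCard_vertices_unitCube, natCard_vertices_eq_of_orderIso
    (fun _ hF => hF.exists_isVertexOf_mem_unitCube)
    (fun _ hF => hF.exists_isVertexOf_mem hP.isPolytope hne) φ]

end UnitCube

lemma Set.exists_fourth_of_ncard_eq_four {α : Type*} {s : Set α} (hs : s.ncard = 4) {a b d : α}
    (ha : a ∈ s) (hb : b ∈ s) (hd : d ∈ s) (hab : a ≠ b) (had : a ≠ d) (hbd : b ≠ d) :
    ∃ c ∈ s, c ≠ a ∧ c ≠ b ∧ c ≠ d ∧ ∀ x ∈ s, x ≠ a → x ≠ b → x ≠ d → x = c := by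
  have h1 : (s \ {a, b, d}).ncard = 1 := by
    rw [Set.ncard_sdiff (by rintro x (rfl | rfl | rfl) <;> assumption), hs,
      Set.ncard_insert_of_notMem (by simp [hab, had]), Set.ncard_pair hbd]
  obtain ⟨c, hc⟩ := Set.ncard_eq_one.1 h1
  have hcs : c ∈ s \ {a, b, d} := hc ▸ rfl
  simp only [Set.mem_sdiff, Set.mem_insert_iff, Set.mem_singleton_iff, not_or] at hcs
  refine ⟨c, hcs.1, hcs.2.1, hcs.2.2.1, hcs.2.2.2, fun x hx hxa hxb hxd => ?_⟩
  have : x ∈ s \ {a, b, d} := ⟨hx, by simp [hxa, hxb, hxd]⟩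
  rwa [hc] at this

section QuadCycle

variable {E : Type*} [AddCommGroup E] [Module ℝ E]

/-- Indices are added in `Fin 4`, so the last vertex `v 3` is joined to `v 0`. -/
structure IsQuadCycle (C : Set E) (v : Fin 4 → E) : Prop where
  injective : Function.Injective v
  isVertexOf : ∀ i, IsVertexOf C (v i)
  isEdgeOf : ∀ i, IsEdgeOf C (segment ℝ (v i) (v (i + 1)))

variable {C : Set E} {v : Fin 4 → E}

lemma IsQuadCycle.notMem_segment (hv : IsQuadCycle C v) {i j : Fin 4} (hji : j ≠ i)
    (hji' : j ≠ i + 1) : v j ∉ segment ℝ (v i) (v (i + 1)) := fun h =>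
  hji' (hv.injective ((hv.isVertexOf j).eq_of_mem_segment (hv.isVertexOf i).mem
    (hv.isVertexOf (i + 1)).mem (hv.injective.ne hji) h))

lemma IsQuadCycle.segment_ne (hv : IsQuadCycle C v) (i : Fin 4) :
    segment ℝ (v i) (v (i + 1)) ≠ segment ℝ (v (i + 2)) (v (i + 2 + 1)) := fun h =>
  hv.notMem_segment (i := i) (j := i + 2) (by fin_cases i <;> decide) (by fin_cases i <;> decide)
    (by rw [h]; exact left_mem_segment ℝ _ _)

end QuadCycle

section SimplePolygon

variable {C : Set (Fin 2 → ℝ)}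

lemma IsSimplePolytope.eq_or_eq_of_isEdgeOf (hs : IsSimplePolytope C) {a : Fin 2 → ℝ}
    (ha : IsVertexOf C a) {F₁ F₂ F : Set (Fin 2 → ℝ)} (h₁ : IsEdgeOf C F₁) (h₂ : IsEdgeOf C F₂)
    (ha₁ : a ∈ F₁) (ha₂ : a ∈ F₂) (hne : F₁ ≠ F₂) (hF : IsEdgeOf C F) (haF : a ∈ F) :
    F = F₁ ∨ F = F₂ := by
  have hsub : ({F₁, F₂} : Set (Set (Fin 2 → ℝ))) ⊆ {F | IsEdgeOf C F ∧ a ∈ F} := by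
    rintro G (rfl | rfl)
    exacts [⟨h₁, ha₁⟩, ⟨h₂, ha₂⟩]
  have heq := Set.eq_of_subset_of_ncard_le hsub (by rw [hs a ha, Set.ncard_pair hne])
    (Set.finite_of_ncard_ne_zero (by rw [hs a ha]; norm_num))
  have hFmem : F ∈ ({F₁, F₂} : Set (Set (Fin 2 → ℝ))) := heq ▸ ⟨hF, haF⟩
  simpa using hFmem

lemma IsSimplePolytope.exists_neighbors (hP : IsPolytope C) (hs : IsSimplePolytope C)
    {a : Fin 2 → ℝ} (ha : IsVertexOf C a) :
    ∃ b c, b ≠ c ∧ a ≠ b ∧ a ≠ c ∧ IsVertexOf C b ∧ IsVertexOf C c ∧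
      IsEdgeOf C (segment ℝ a b) ∧ IsEdgeOf C (segment ℝ a c) ∧
      ∀ F, IsEdgeOf C F → a ∈ F → F = segment ℝ a b ∨ F = segment ℝ a c := by
  obtain ⟨F₁, F₂, hne, hset⟩ := Set.ncard_eq_two.1 (hs a ha)
  have h₁ : IsEdgeOf C F₁ ∧ a ∈ F₁ := (hset.symm ▸ Or.inl rfl : F₁ ∈ {F | IsEdgeOf C F ∧ a ∈ F})
  have h₂ : IsEdgeOf C F₂ ∧ a ∈ F₂ :=
    (hset.symm ▸ Or.inr rfl : F₂ ∈ {F | IsEdgeOf C F ∧ a ∈ F})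
  obtain ⟨b, hab, hb, rfl⟩ := h₁.1.exists_eq_segment_of_mem hP ha h₁.2
  obtain ⟨c, hac, hc, rfl⟩ := h₂.1.exists_eq_segment_of_mem hP ha h₂.2
  refine ⟨b, c, fun h => hne (h ▸ rfl), hab, hac, hb, hc, h₁.1, h₂.1, fun F hF haF => ?_⟩
  have hFmem : F ∈ ({segment ℝ a b, segment ℝ a c} : Set (Set (Fin 2 → ℝ))) := hset ▸ ⟨hF, haF⟩
  simpa using hFmem

lemma IsSimplePolytope.exists_isQuadCycle (hP : IsPolytope C) (hs : IsSimplePolytope C)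
    (h4 : Nat.card {v // IsVertexOf C v} = 4) : ∃ v, IsQuadCycle C v := by
  have h4' : {v | IsVertexOf C v}.ncard = 4 := h4
  obtain ⟨a, ha⟩ := Set.nonempty_of_ncard_ne_zero (by rw [h4']; norm_num)
  obtain ⟨b, d, hbd, hab, had, hb, hd, hab_e, had_e, hedges⟩ := hs.exists_neighbors hP ha
  obtain ⟨c, hc, hca, hcb, hcd, hrest⟩ :=
    Set.exists_fourth_of_ncard_eq_four h4' ha hb hd hab had hbd
  -- The remaining vertex `c` is not joined to `a`, so its two neighbors are `b` and `d`.
  have hnbr : ∀ z, IsVertexOf C z → c ≠ z → IsEdgeOf C (segment ℝ c z) → z = b ∨ z = d := by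
    intro z hz hcz hcz_e
    by_contra! h
    refine hcz (hrest z hz (fun hza => ?_) h.1 h.2).symm
    subst hza
    rcases hedges _ hcz_e (right_mem_segment ℝ c z) with h' | h'
    · exact hcb (hc.eq_of_mem_segment hz.mem hb.mem hca (h' ▸ left_mem_segment ℝ c z))
    · exact hcd (hc.eq_of_mem_segment hz.mem hd.mem hca (h' ▸ left_mem_segment ℝ c z))
  obtain ⟨x, y, hxy, hcx, hcy, hx, hy, hcx_e, hcy_e, -⟩ := hs.exists_neighbors hP hc
  have hcb_e : IsEdgeOf C (segment ℝ c b) ∧ IsEdgeOf C (segment ℝ c d) := by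
    rcases hnbr x hx hcx hcx_e with rfl | rfl <;> rcases hnbr y hy hcy hcy_e with rfl | rfl
    exacts [absurd rfl hxy, ⟨hcx_e, hcy_e⟩, ⟨hcy_e, hcx_e⟩, absurd rfl hxy]
  refine ⟨![a, b, c, d], ⟨?_, ?_, ?_⟩⟩
  · intro i j hij
    fin_cases i <;> fin_cases j <;> simp_all [eq_comm]
  · intro i
    fin_cases i <;> simpa
  · intro i
    fin_cases i
    · simpa using hab_e
    · simpa [segment_symm ℝ b c] using hcb_e.1
    · simpa using hcb_e.2
    · simpa [segment_symm ℝ d a] using had_e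

end SimplePolygon

section Lattice

variable {d : ℕ}

def intVec (x : Fin d → ℤ) : Fin d → ℝ := fun i => (x i : ℝ)

@[simp]
lemma intVec_apply (x : Fin d → ℤ) (i : Fin d) : intVec x i = x i := rfl

lemma intVec_neg (x : Fin d → ℤ) : intVec (-x) = -intVec x := by
  ext i
  simp

lemma intVec_injective : Function.Injective (intVec (d := d)) := fun _ _ h =>
  funext fun i => Int.cast_injective (congrFun h i)

lemma IsPrimitiveVector.ne_zero {x : Fin d → ℤ} (hx : IsPrimitiveVector x) : x ≠ 0 := by
  rintro rfl
  exact not_isUnit_zero (hx 0 0 (zero_smul ℤ 0).symm)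

lemma IsPrimitiveVector.intVec_ne_zero {x : Fin d → ℤ} (hx : IsPrimitiveVector x) :
    intVec x ≠ 0 := fun h => hx.ne_zero (intVec_injective (h.trans (by ext; simp)))

lemma IsPrimitiveVector.neg {x : Fin d → ℤ} (hx : IsPrimitiveVector x) : IsPrimitiveVector (-x) :=
  fun k w h => hx k (-w) (by rw [smul_neg, ← h, neg_neg])

lemma IsPrimitiveVector.exists_sum_mul_eq_one {x : Fin d → ℤ} (hx : IsPrimitiveVector x) :
    ∃ f : Fin d → ℤ, ∑ i, f i * x i = 1 := by
  obtain ⟨g, hg⟩ := Submodule.IsPrincipal.principal (Ideal.span (Set.range x))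
  have hdvd : ∀ i, g ∣ x i := fun i => by
    rw [← Ideal.mem_span_singleton, ← Ideal.submodule_span_eq, ← hg]
    exact Ideal.subset_span ⟨i, rfl⟩
  choose w hw using hdvd
  have hunit : IsUnit g := hx g w (funext fun i => by simp [hw i])
  have h1 : (1 : ℤ) ∈ Ideal.span (Set.range x) := by
    rw [hg, Ideal.submodule_span_eq, Ideal.span_singleton_eq_top.2 hunit]
    exact Submodule.mem_top
  simpa using (Submodule.mem_span_range_iff_exists_fun ℤ).1 h1

lemma IsPrimitiveVector.eq_of_sameRay {x y : Fin d → ℤ} (hx : IsPrimitiveVector x)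
    (hy : IsPrimitiveVector y) (h : SameRay ℝ (intVec x) (intVec y)) : x = y := by
  obtain ⟨r, hr, hrxy⟩ := h.exists_pos_left hx.intVec_ne_zero hy.intVec_ne_zero
  obtain ⟨f, hf⟩ := hx.exists_sum_mul_eq_one
  -- Applying the functional `f` shows that the ratio `r` is an integer `m`.
  set m : ℤ := ∑ i, f i * y i
  have hrm : r = m := by
    have hfx : ∑ i, (f i : ℝ) * intVec x i = 1 := by
      simp only [intVec_apply]
      exact_mod_cast hf
    have := congrArg (fun z => ∑ i, (f i : ℝ) * z i) hrxy
    simp only [Pi.smul_apply, smul_eq_mul, mul_left_comm _ r, ← Finset.mul_sum, hfx,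
      mul_one] at this
    rw [this]
    push_cast [m]
    rfl
  have hyx : y = m • x := intVec_injective <| funext fun i => by
    simpa [hrm] using (congrFun hrxy i).symm
  have hm : m = 1 := by
    rcases Int.isUnit_iff.1 (hy m x hyx) with h | h
    · exact h
    · rw [h] at hrm
      norm_num at hrm
      linarith
  rw [hyx, hm, one_smul]

lemma IsPrimitiveVector.eq_of_sameRay_of_sameRay {w : Fin d → ℝ} (hw : w ≠ 0)
    {x y : Fin d → ℤ} (hx : IsPrimitiveVector x) (hy : IsPrimitiveVector y)
    (hxw : SameRay ℝ w (intVec x)) (hyw : SameRay ℝ w (intVec y)) : x = y :=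
  hx.eq_of_sameRay hy (hxw.symm.trans hyw fun h => (hw h).elim)

end Lattice

section Det2

variable {R : Type*} [CommRing R]

def det2 (x y : Fin 2 → R) : R := x 0 * y 1 - x 1 * y 0

lemma det2_swap (x y : Fin 2 → R) : det2 y x = -det2 x y := by
  simp only [det2]
  ring

lemma det2_neg_right (x y : Fin 2 → R) : det2 y (-x) = det2 x y := by
  simp only [det2, Pi.neg_apply]
  ring

lemma det2_smul_smul (s t : R) (x y : Fin 2 → R) : det2 (s • x) (t • y) = s * t * det2 x y := by
  simp only [det2, Pi.smul_apply, smul_eq_mul]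
  ring

lemma det2_intVec (x y : Fin 2 → ℤ) : det2 (intVec x) (intVec y) = ((det2 x y : ℤ) : ℝ) := by
  simp [det2]

/-- By the Plücker relation `[02][13] = [01][23] + [03][12]`, where `[ij] = det2 (P i) (P j)`. -/
lemma det2_mul_det2_eq_zero_of_cyclic (P : Fin 4 → Fin 2 → R)
    (h : ∀ i, det2 (P i) (P (i + 1)) = det2 (P 0) (P 1)) :
    det2 (P 0) (P 2) * det2 (P 1) (P 3) = 0 := by
  have h1 : det2 (P 1) (P 2) = det2 (P 0) (P 1) := h 1
  have h2 : det2 (P 2) (P 3) = det2 (P 0) (P 1) := h 2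
  have h3 : det2 (P 3) (P 0) = det2 (P 0) (P 1) := h 3
  simp only [det2] at h1 h2 h3 ⊢
  linear_combination (P 0 0 * P 1 1 - P 0 1 * P 1 0) * h2 +
    (P 0 0 * P 3 1 - P 0 1 * P 3 0) * h1 - (P 0 0 * P 1 1 - P 0 1 * P 1 0) * h3

lemma Module.Basis.det2_eq_one_or_neg_one (β : Module.Basis (Fin 2) ℤ (Fin 2 → ℤ)) :
    det2 (β 0) (β 1) = 1 ∨ det2 (β 0) (β 1) = -1 := by
  have h := (Pi.basisFun ℤ (Fin 2)).isUnit_det β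
  rw [Module.Basis.det_apply, Matrix.det_fin_two] at h
  simp only [Module.Basis.toMatrix_apply, Pi.basisFun_repr] at h
  have hdet : det2 (β 0) (β 1) = β 0 0 * β 1 1 - β 1 0 * β 0 1 := by
    simp only [det2]
    ring
  exact hdet ▸ Int.isUnit_iff.1 h

end Det2

lemma exists_det2_eq_mul_of_apply_eq_zero {u : (Fin 2 → ℝ) →ₗ[ℝ] ℝ} {d : Fin 2 → ℝ}
    (hd : d ≠ 0) (hu : u ≠ 0) (hud : u d = 0) : ∃ c ≠ 0, ∀ z, det2 d z = c * u z := by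
  set α := u fun j => if 0 = j then 1 else 0
  set β := u fun j => if 1 = j then 1 else 0
  have hu' : ∀ z, u z = α * z 0 + β * z 1 := fun z => by
    rw [LinearMap.pi_apply_eq_sum_univ u z, Fin.sum_univ_two, smul_eq_mul, smul_eq_mul]
    ring
  rw [hu'] at hud
  have hs : 0 < α ^ 2 + β ^ 2 := by
    by_contra! h
    refine hu (LinearMap.ext fun z => ?_)
    rw [hu', LinearMap.zero_apply, show α = 0 by nlinarith, show β = 0 by nlinarith]
    ring
  -- As `u` vanishes on `d`, the vector `d` is `K / (α ^ 2 + β ^ 2)` times `(-β, α)`.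
  set K := α * d 1 - β * d 0
  have hK : K ≠ 0 := by
    intro hK
    have h0 : (α ^ 2 + β ^ 2) * d 0 = 0 := by linear_combination α * hud - β * hK
    have h1 : (α ^ 2 + β ^ 2) * d 1 = 0 := by linear_combination β * hud + α * hK
    exact hd (funext (Fin.forall_fin_two.2 ⟨(mul_eq_zero.1 h0).resolve_left hs.ne',
      (mul_eq_zero.1 h1).resolve_left hs.ne'⟩))
  refine ⟨-K / (α ^ 2 + β ^ 2), div_ne_zero (neg_ne_zero.2 hK) hs.ne', fun z => ?_⟩
  rw [hu', det2, div_mul_eq_mul_div, eq_div_iff hs.ne']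
  linear_combination (z 1 * α - z 0 * β) * hud

/-- Convexity in the plane: if `x` and `y` lie strictly on the same side of the line `ab`, the
path `x → a → b → y` turns the same way at `a` and at `b`. -/
lemma det2_mul_det2_pos_of_lt {u : (Fin 2 → ℝ) →ₗ[ℝ] ℝ} {a b x y : Fin 2 → ℝ} (hab : a ≠ b)
    (hu : u a = u b) (hx : u x < u a) (hy : u y < u b) :
    0 < det2 (a - x) (b - a) * det2 (b - a) (y - b) := by
  obtain ⟨c, hc, hdet⟩ := exists_det2_eq_mul_of_apply_eq_zero (u := u) (sub_ne_zero.2 hab.symm)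
    (fun h => by subst h; simp at hx) (by rw [map_sub, hu, sub_self])
  have hleft : det2 (a - x) (b - a) = det2 (b - a) (x - a) := by
    simp only [det2, Pi.sub_apply]
    ring
  rw [hleft, hdet, hdet, map_sub, map_sub]
  have : 0 < (u x - u a) * (u y - u b) := mul_pos_of_neg_of_neg (by linarith) (by linarith)
  calc 0 < c ^ 2 * ((u x - u a) * (u y - u b)) := by positivity
    _ = _ := by ring

lemma mem_span_singleton_of_det2_eq_zero {x y : Fin 2 → ℝ} (hy : y ≠ 0) (h : det2 x y = 0) :
    x ∈ ℝ ∙ y := by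
  have hs : y 0 * y 0 + y 1 * y 1 ≠ 0 := by
    intro h0
    refine hy (funext (Fin.forall_fin_two.2 ⟨?_, ?_⟩)) <;>
      simp only [Pi.zero_apply] <;> nlinarith [mul_self_nonneg (y 0), mul_self_nonneg (y 1)]
  simp only [det2] at h
  refine Submodule.mem_span_singleton.2
    ⟨(x 0 * y 0 + x 1 * y 1) / (y 0 * y 0 + y 1 * y 1), funext (Fin.forall_fin_two.2 ⟨?_, ?_⟩)⟩
  all_goals rw [Pi.smul_apply, smul_eq_mul, div_mul_eq_mul_div, div_eq_iff hs]
  · linear_combination (-y 1) * h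
  · linear_combination y 0 * h

lemma areParallel_segment_of_det2_eq_zero {p q r s : Fin 2 → ℝ} (hpq : p ≠ q) (hrs : r ≠ s)
    (h : det2 (q - p) (s - r) = 0) : AreParallel (segment ℝ p q) (segment ℝ r s) := by
  rw [AreParallel, direction_affineSpan_segment, direction_affineSpan_segment]
  refine le_antisymm ((Submodule.span_singleton_le_iff_mem _ _).2 ?_)
    ((Submodule.span_singleton_le_iff_mem _ _).2 ?_)
  · exact mem_span_singleton_of_det2_eq_zero (sub_ne_zero.2 hrs.symm) h
  · refine mem_span_singleton_of_det2_eq_zero (sub_ne_zero.2 hpq.symm) ?_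
    rw [det2_swap, h, neg_zero]

section SmoothVertex

variable {C : Set (Fin 2 → ℝ)} {a b c : Fin 2 → ℝ} {β : Module.Basis (Fin 2) ℤ (Fin 2 → ℤ)}

lemma IsPrimitiveEdgeDirectionAt.sameRay_or_sameRay {z : Fin 2 → ℤ}
    (hz : IsPrimitiveEdgeDirectionAt C a z)
    (hedges : ∀ F, IsEdgeOf C F → a ∈ F → F = segment ℝ a b ∨ F = segment ℝ a c) :
    SameRay ℝ (b - a) (intVec z) ∨ SameRay ℝ (c - a) (intVec z) := by
  obtain ⟨-, F, hF, haF, ε, hε, hmem⟩ := hz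
  rcases hedges F hF haF with rfl | rfl
  exacts [Or.inl (sameRay_of_add_smul_mem_segment hε hmem),
    Or.inr (sameRay_of_add_smul_mem_segment hε hmem)]

lemma exists_primitive_sameRay_of_basis (hβ : ∀ i, IsPrimitiveEdgeDirectionAt C a (β i))
    (hedges : ∀ F, IsEdgeOf C F → a ∈ F → F = segment ℝ a b ∨ F = segment ℝ a c)
    (hca : c ≠ a) : ∃ x, IsPrimitiveVector x ∧ SameRay ℝ (b - a) (intVec x) := by
  rcases (hβ 0).sameRay_or_sameRay hedges with h0 | h0
  · exact ⟨β 0, (hβ 0).1, h0⟩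
  rcases (hβ 1).sameRay_or_sameRay hedges with h1 | h1
  · exact ⟨β 1, (hβ 1).1, h1⟩
  -- Otherwise both basis vectors are the primitive vector on the ray of `c - a`.
  exact absurd (β.injective ((hβ 0).1.eq_of_sameRay_of_sameRay (sub_ne_zero.2 hca) (hβ 1).1 h0 h1))
    (by decide)

/-- Each basis vector points along one of the two edges, and a ray contains only one primitive
vector, so `{x, y}` is the basis `{β 0, β 1}`. -/
lemma det2_eq_one_or_neg_one_of_basis (hβ : ∀ i, IsPrimitiveEdgeDirectionAt C a (β i))
    (hedges : ∀ F, IsEdgeOf C F → a ∈ F → F = segment ℝ a b ∨ F = segment ℝ a c)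
    (hba : b ≠ a) (hca : c ≠ a) {x y : Fin 2 → ℤ} (hx : IsPrimitiveVector x)
    (hy : IsPrimitiveVector y) (hxb : SameRay ℝ (b - a) (intVec x))
    (hyc : SameRay ℝ (c - a) (intVec y)) : det2 x y = 1 ∨ det2 x y = -1 := by
  have hβxy : ∀ i, β i = x ∨ β i = y := fun i => by
    rcases (hβ i).sameRay_or_sameRay hedges with h | h
    · exact Or.inl ((hβ i).1.eq_of_sameRay_of_sameRay (sub_ne_zero.2 hba) hx h hxb)
    · exact Or.inr ((hβ i).1.eq_of_sameRay_of_sameRay (sub_ne_zero.2 hca) hy h hyc)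
  have hne : β 0 ≠ β 1 := β.injective.ne (by decide)
  have hdet := β.det2_eq_one_or_neg_one
  rcases hβxy 0 with h0 | h0 <;> rcases hβxy 1 with h1 | h1
  · exact absurd (h0.trans h1.symm) hne
  · rwa [← h0, ← h1]
  · rw [h0, h1, det2_swap, neg_eq_iff_eq_neg, neg_eq_iff_eq_neg] at hdet
    exact hdet.symm
  · exact absurd (h0.trans h1.symm) hne

end SmoothVertex

lemma apply_eq_apply_zero_of_mul_pos {D : Fin 4 → ℤ} (h1 : ∀ i, D i = 1 ∨ D i = -1)
    (hpos : ∀ i, 0 < D i * D (i + 1)) (i : Fin 4) : D i = D 0 := by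
  have hstep : ∀ j, D (j + 1) = D j := fun j => by
    have := hpos j
    rcases h1 j with h | h <;> rcases h1 (j + 1) with h' | h' <;> rw [h, h'] at this ⊢ <;>
      norm_num at this
  fin_cases i
  · rfl
  · exact hstep 0
  · exact (hstep 1).trans (hstep 0)
  · exact ((hstep 2).trans (hstep 1)).trans (hstep 0)

section SmoothQuadrilateral

variable {C : Set (Fin 2 → ℝ)} {v : Fin 4 → Fin 2 → ℝ} {P : Fin 4 → Fin 2 → ℤ}

lemma IsQuadCycle.eq_or_eq_of_isEdgeOf (hv : IsQuadCycle C v) (hs : IsSimplePolytope C)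
    (i : Fin 4) {F : Set (Fin 2 → ℝ)} (hF : IsEdgeOf C F) (hvF : v i ∈ F) :
    F = segment ℝ (v i) (v (i + 1)) ∨ F = segment ℝ (v i) (v (i - 1)) := by
  have hprev := hv.isEdgeOf (i - 1)
  rw [sub_add_cancel, segment_symm] at hprev
  refine hs.eq_or_eq_of_isEdgeOf (hv.isVertexOf i) (hv.isEdgeOf i) hprev
    (left_mem_segment ℝ _ _) (left_mem_segment ℝ _ _) (fun h => ?_) hF hvF
  refine hv.notMem_segment (i := i) (j := i - 1) (by fin_cases i <;> decide)
    (by fin_cases i <;> decide) ?_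
  rw [h]
  exact right_mem_segment ℝ _ _

lemma IsQuadCycle.exists_primitive_sameRay (hv : IsQuadCycle C v) (hs : IsSimplePolytope C)
    (hsm : ∀ a, IsVertexOf C a →
      ∃ β : Module.Basis (Fin 2) ℤ (Fin 2 → ℤ), ∀ i, IsPrimitiveEdgeDirectionAt C a (β i))
    (i : Fin 4) : ∃ x, IsPrimitiveVector x ∧ SameRay ℝ (v (i + 1) - v i) (intVec x) := by
  obtain ⟨β, hβ⟩ := hsm _ (hv.isVertexOf i)
  exact exists_primitive_sameRay_of_basis hβ (fun F hF h => hv.eq_or_eq_of_isEdgeOf hs i hF h)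
    (hv.injective.ne (by fin_cases i <;> decide))

lemma IsQuadCycle.exists_pos_smul (hv : IsQuadCycle C v) (hP : ∀ i, IsPrimitiveVector (P i))
    (hPv : ∀ i, SameRay ℝ (v (i + 1) - v i) (intVec (P i))) (i : Fin 4) :
    ∃ t : ℝ, 0 < t ∧ v (i + 1) - v i = t • intVec (P i) :=
  (hPv i).exists_pos_right (sub_ne_zero.2 (hv.injective.ne (by fin_cases i <;> decide)))
    (hP i).intVec_ne_zero

lemma IsQuadCycle.det2_eq_one_or_neg_one (hv : IsQuadCycle C v) (hs : IsSimplePolytope C)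
    (hsm : ∀ a, IsVertexOf C a →
      ∃ β : Module.Basis (Fin 2) ℤ (Fin 2 → ℤ), ∀ i, IsPrimitiveEdgeDirectionAt C a (β i))
    (hP : ∀ i, IsPrimitiveVector (P i)) (hPv : ∀ i, SameRay ℝ (v (i + 1) - v i) (intVec (P i)))
    (i : Fin 4) : det2 (P i) (P (i + 1)) = 1 ∨ det2 (P i) (P (i + 1)) = -1 := by
  obtain ⟨β, hβ⟩ := hsm _ (hv.isVertexOf (i + 1))
  have hback : SameRay ℝ (v (i + 1 - 1) - v (i + 1)) (intVec (-P i)) := by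
    rw [add_sub_cancel_right, intVec_neg, ← neg_sub]
    exact (hPv i).neg
  rw [← det2_neg_right]
  exact det2_eq_one_or_neg_one_of_basis hβ
    (fun F hF h => hv.eq_or_eq_of_isEdgeOf hs (i + 1) hF h)
    (hv.injective.ne (by fin_cases i <;> decide)) (hv.injective.ne (by fin_cases i <;> decide))
    (hP (i + 1)) (hP i).neg (hPv (i + 1)) hback

lemma IsQuadCycle.det2_mul_det2_pos (hv : IsQuadCycle C v) (hP : ∀ i, IsPrimitiveVector (P i))
    (hPv : ∀ i, SameRay ℝ (v (i + 1) - v i) (intVec (P i))) (i : Fin 4) :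
    0 < det2 (P i) (P (i + 1)) * det2 (P (i + 1)) (P (i + 1 + 1)) := by
  obtain ⟨t₀, ht₀, h₀⟩ := hv.exists_pos_smul hP hPv i
  obtain ⟨t₁, ht₁, h₁⟩ := hv.exists_pos_smul hP hPv (i + 1)
  obtain ⟨t₂, ht₂, h₂⟩ := hv.exists_pos_smul hP hPv (i + 1 + 1)
  obtain ⟨u, hu⟩ := (hv.isEdgeOf (i + 1)).1
  have ha : v (i + 1) ∈ maxFace C u := hu ▸ left_mem_segment ℝ _ _
  have hb : v (i + 1 + 1) ∈ maxFace C u := hu ▸ right_mem_segment ℝ _ _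
  have hx : u (v i) < u (v (i + 1)) := lt_of_mem_maxFace_of_notMem ha (hv.isVertexOf i).mem
    (hu ▸ hv.notMem_segment (by fin_cases i <;> decide) (by fin_cases i <;> decide))
  have hy : u (v (i + 1 + 1 + 1)) < u (v (i + 1 + 1)) := lt_of_mem_maxFace_of_notMem hb
    (hv.isVertexOf _).mem
    (hu ▸ hv.notMem_segment (by fin_cases i <;> decide) (by fin_cases i <;> decide))
  have key := det2_mul_det2_pos_of_lt (hv.injective.ne (by fin_cases i <;> decide))
    (le_antisymm (hb.2 _ ha.1) (ha.2 _ hb.1)) hx hy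
  rw [h₀, h₁, h₂, det2_smul_smul, det2_smul_smul, det2_intVec, det2_intVec] at key
  have hpos : (0 : ℝ) < t₀ * t₁ * (t₁ * t₂) * (det2 (P i) (P (i + 1)) *
      det2 (P (i + 1)) (P (i + 1 + 1)) : ℤ) := by
    push_cast
    linarith
  exact_mod_cast pos_of_mul_pos_right hpos (by positivity)

lemma IsQuadCycle.areParallel_of_det2_eq_zero (hv : IsQuadCycle C v)
    (hP : ∀ i, IsPrimitiveVector (P i)) (hPv : ∀ i, SameRay ℝ (v (i + 1) - v i) (intVec (P i)))
    (i : Fin 4) (h : det2 (P i) (P (i + 2)) = 0) :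
    AreParallel (segment ℝ (v i) (v (i + 1))) (segment ℝ (v (i + 2)) (v (i + 2 + 1))) := by
  obtain ⟨t, -, ht⟩ := hv.exists_pos_smul hP hPv i
  obtain ⟨s, -, hs⟩ := hv.exists_pos_smul hP hPv (i + 2)
  refine areParallel_segment_of_det2_eq_zero (hv.injective.ne (by fin_cases i <;> decide))
    (hv.injective.ne (by fin_cases i <;> decide)) ?_
  rw [ht, hs, det2_smul_smul, det2_intVec, h, Int.cast_zero, mul_zero]

end SmoothQuadrilateral

/-- Every smooth 2-dimensional combinatorial cube (smooth lattice
quadrilateral) has two distinct parallel edges. -/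
theorem smooth_quadrilateral_has_two_parallel_edges
    (C : Set (Fin 2 → ℝ))
    (hC : IsCombinatorialCube 2 C) (hsmooth : IsSmoothPolytope C) :
    ∃ F G : Set (Fin 2 → ℝ),
      IsEdgeOf C F ∧ IsEdgeOf C G ∧ F ≠ G ∧ AreParallel F G := by
  obtain ⟨-, hsimple, hbasis⟩ := hsmooth
  have hne : C.Nonempty := .of_dimSet_ne_zero (by rw [hC.2.1]; norm_num)
  obtain ⟨v, hv⟩ := hsimple.exists_isQuadCycle hC.1.isPolytope (hC.natCard_vertices hne)
  choose P hP hPv using hv.exists_primitive_sameRay hsimple hbasis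
  -- Consecutive edge directions are `ℤ`-bases (smoothness) of the same orientation (convexity).
  have hconst : ∀ i, det2 (P i) (P (i + 1)) = det2 (P 0) (P 1) :=
    apply_eq_apply_zero_of_mul_pos (D := fun i => det2 (P i) (P (i + 1)))
      (hv.det2_eq_one_or_neg_one hsimple hbasis hP hPv) (hv.det2_mul_det2_pos hP hPv)
  obtain ⟨i, hi⟩ : ∃ i : Fin 4, det2 (P i) (P (i + 2)) = 0 := by
    rcases mul_eq_zero.1 (det2_mul_det2_eq_zero_of_cyclic P hconst) with h | h
    exacts [⟨0, h⟩, ⟨1, h⟩]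
  exact ⟨_, _, hv.isEdgeOf i, hv.isEdgeOf (i + 2), hv.segment_ne i,
    hv.areParallel_of_det2_eq_zero hP hPv i hi⟩
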